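/- Let r ≥ 1 be an integer, ε ∈ {0,1}, let p, q, t₁, …, t₆ be nonzero complex numbers with |p| < 1, |q| < 1, and let n₁, …, n₆ ∈ ℤ satisfy the balancing condition ∏_{a=1}^{6} t_a = pq and ∑_{a=1}^{6} n_a + 3ε = 0. Then for every m ∈ ℤ and every nonzero z ∈ ℂ not a pole of the factors involved, Δ_ε^{(r)}(z, m+r; t_a, n_a) = Δ_ε^{(r)}(z, m; t_a, n_a), i.e. the kernel of the rarefied elliptic beta integral is r-periodic in the discrete variable m. -/

import Mathlib

open Complex Finset

noncomputable section

/-- The infinite q-Pochhammer symbol `(z;p)_∞ = ∏_{j≥0} (1 - z p^j)`. -/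
def qPochInf (z p : ℂ) : ℂ := ∏' j : ℕ, (1 - z * p ^ j)

/-- The theta function `θ(z;p) = (z;p)_∞ (p z⁻¹; p)_∞`. -/
def theta0 (z p : ℂ) : ℂ := qPochInf z p * qPochInf (p * z⁻¹) p

/-- The elliptic gamma function `Γ(z;p,q)`. -/
def ellGamma (z p q : ℂ) : ℂ :=
  ∏' jk : ℕ × ℕ,
    (1 - z⁻¹ * p ^ (jk.1 + 1) * q ^ (jk.2 + 1)) / (1 - z * p ^ jk.1 * q ^ jk.2)

/-- The second order elliptic gamma function `Γ(z;p,q,t)`. -/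
def ellGamma3 (z p q t : ℂ) : ℂ :=
  ∏' x : ℕ × ℕ × ℕ,
    (1 - z * p ^ x.1 * q ^ x.2.1 * t ^ x.2.2) *
      (1 - z⁻¹ * p ^ (x.1 + 1) * q ^ (x.2.1 + 1) * t ^ (x.2.2 + 1))

/-- The lens space elliptic gamma function `γ^{(r)}(z,m;p,q)`. -/
def lensGamma (r : ℕ) (z : ℂ) (m : ℤ) (p q : ℂ) : ℂ :=
  ellGamma (z * p ^ m) (p ^ r) (p * q) * ellGamma (z * q ^ ((r : ℤ) - m)) (q ^ r) (p * q)

/-- The rarefied elliptic gamma function `Γ^{(r)}(z,m;p,q)`, built with fixed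
square roots σ, τ satisfying `σ² = pq`, `τ² = p/q`, `στ = p`. -/
def rarGamma (r : ℕ) (z : ℂ) (m : ℤ) (p q σ τ : ℂ) : ℂ :=
  (-z / σ) ^ (m * (m - 1) / 2) * τ ^ (m * (m - 1) * (2 * m - 1) / 6) * lensGamma r z m p q

/-- `w` avoids the pole set `{P^{-j} Q^{-k} : j,k ≥ 0}` of `ellGamma w P Q`. -/
def notPole (w P Q : ℂ) : Prop := ∀ j k : ℕ, w ≠ P ^ (-(j : ℤ)) * Q ^ (-(k : ℤ))

/-- `z` is not a pole of either elliptic gamma factor of `lensGamma r z m p q`. -/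
def lensReg (r : ℕ) (z : ℂ) (m : ℤ) (p q : ℂ) : Prop :=
  notPole (z * p ^ m) (p ^ r) (p * q) ∧ notPole (z * q ^ ((r : ℤ) - m)) (q ^ r) (p * q)

/-- The kernel `Δ_ε^{(r)}(z,m;t_a,n_a)` of the rarefied elliptic beta integral. -/
def Δker (r : ℕ) (ε : ℤ) (p q σ τ : ℂ) (t : Fin 6 → ℂ) (n : Fin 6 → ℤ)
    (z : ℂ) (m : ℤ) : ℂ :=
  (∏ a, rarGamma r (t a * z) (n a + m + ε) p q σ τ *
      rarGamma r (t a * z⁻¹) (n a - m) p q σ τ) /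
    (rarGamma r (z ^ 2) (2 * m + ε) p q σ τ *
      rarGamma r (z⁻¹ ^ 2) (-(2 * m + ε)) p q σ τ)

/-- Regularity of the kernel `Δ_ε^{(r)}` at the point `(z,m)`: none of the rarefied
elliptic gamma factors involved sits at a pole and the denominator does not vanish. -/
def ΔReg (r : ℕ) (ε : ℤ) (p q σ τ : ℂ) (t : Fin 6 → ℂ) (n : Fin 6 → ℤ)
    (z : ℂ) (m : ℤ) : Prop :=
  (∀ a, lensReg r (t a * z) (n a + m + ε) p q ∧ lensReg r (t a * z⁻¹) (n a - m) p q) ∧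
    lensReg r (z ^ 2) (2 * m + ε) p q ∧ lensReg r (z⁻¹ ^ 2) (-(2 * m + ε)) p q ∧
    rarGamma r (z ^ 2) (2 * m + ε) p q σ τ ≠ 0 ∧
    rarGamma r (z⁻¹ ^ 2) (-(2 * m + ε)) p q σ τ ≠ 0

/-!
Via `Γ(w; P, Q) = (w⁻¹PQ; P, Q)_∞ / (w; P, Q)_∞`, splitting off the `j = 0` slice of the double
product gives `Γ(Pw; P, Q) = θ(w; Q) Γ(w; P, Q)`, and `θ(sx; s) = -x⁻¹ θ(x; s)` iterates to
`θ(s^M x; s) = (-x)^{-M} s^{-M(M-1)/2} θ(x; s)`. Together they show that shifting `M` by `r`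
multiplies `Γ^{(r)}(w, M)` by the monomial `(-w/σ)^{φ(M)} τ^{ψ(M)}` with `φ`, `ψ` polynomial in `M`.
Under `(w, M) ↦ (w⁻¹, -M - r)` this monomial only changes by `σ^{2φ(M)}`, which turns the
`z⁻²`-factor of the denominator into the `z²`-factor. In the remaining ratio of monomials the
balancing conditions `∏ t_a = σ²` and `∑ n_a = -3ε` make the exponents of `z` and `τ` vanish and
the powers of `σ` cancel.
-/

lemma prod_zpow_eq_zpow_sum {ι G₀ : Type*} [CommGroupWithZero G₀] (s : Finset ι) (e : ι → ℤ)
    {x : G₀} (hx : x ≠ 0) : ∏ i ∈ s, x ^ e i = x ^ ∑ i ∈ s, e i := by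
  induction s using Finset.cons_induction with
  | empty => simp
  | cons i s hi ih => rw [prod_cons, sum_cons, ih, zpow_add₀ hx]

lemma six_dvd_mul_sub_one_mul_two_mul_sub_one (M : ℤ) : 6 ∣ M * (M - 1) * (2 * M - 1) := by
  have h : ∀ x : ZMod 6, x * (x - 1) * (2 * x - 1) = 0 := by decide
  exact (ZMod.intCast_zmod_eq_zero_iff_dvd _ 6).mp (by push_cast; exact h M)

lemma add_mul_add_sub_one_div_two (M N : ℤ) :
    (M + N) * (M + N - 1) / 2 = M * (M - 1) / 2 + N * (N - 1) / 2 + M * N := by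
  obtain ⟨a, ha⟩ := (Int.even_mul_pred_self M).two_dvd
  obtain ⟨b, hb⟩ := (Int.even_mul_pred_self N).two_dvd
  rw [ha, hb, show (M + N) * (M + N - 1) = 2 * (a + b + M * N) by linear_combination ha + hb]
  simp only [Int.mul_ediv_cancel_left _ two_ne_zero]

lemma add_mul_add_sub_one_mul_two_mul_add_sub_one_div_six (M N : ℤ) :
    (M + N) * (M + N - 1) * (2 * (M + N) - 1) / 6
      = M * (M - 1) * (2 * M - 1) / 6 + N * (N - 1) * (2 * N - 1) / 6 + M * N * (M + N - 1) := by
  obtain ⟨a, ha⟩ := six_dvd_mul_sub_one_mul_two_mul_sub_one M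
  obtain ⟨b, hb⟩ := six_dvd_mul_sub_one_mul_two_mul_sub_one N
  rw [ha, hb, show (M + N) * (M + N - 1) * (2 * (M + N) - 1) = 6 * (a + b + M * N * (M + N - 1))
    by linear_combination ha + hb]
  simp only [Int.mul_ediv_cancel_left _ (show (6 : ℤ) ≠ 0 by norm_num)]

lemma summable_norm_mul_pow {x Q : ℂ} (hQ : ‖Q‖ < 1) : Summable fun k : ℕ => ‖x * Q ^ k‖ := by
  simpa [norm_mul, norm_pow] using
    (summable_geometric_of_lt_one (norm_nonneg Q) hQ).mul_left ‖x‖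

lemma summable_norm_mul_pow_mul_pow {x P Q : ℂ} (hP : ‖P‖ < 1) (hQ : ‖Q‖ < 1) :
    Summable fun jk : ℕ × ℕ => ‖x * P ^ jk.1 * Q ^ jk.2‖ :=
  (summable_norm_mul_pow hP).mul_norm (g := fun k => Q ^ k) <| by
    simpa [norm_pow] using summable_geometric_of_lt_one (norm_nonneg Q) hQ

lemma multipliable_one_sub {ι : Type*} {u : ι → ℂ} (hu : Summable fun i => ‖u i‖) :
    Multipliable fun i => 1 - u i := by
  simpa [sub_eq_add_neg] using multipliable_one_add_of_summable (f := fun i => -u i) (by simpa)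

lemma tprod_one_sub_ne_zero {ι : Type*} {u : ι → ℂ} (hu : Summable fun i => ‖u i‖)
    (h : ∀ i, 1 - u i ≠ 0) : ∏' i, (1 - u i) ≠ 0 := by
  simpa [sub_eq_add_neg] using
    tprod_one_add_ne_zero_of_summable (f := fun i => -u i) (by simpa [← sub_eq_add_neg]) (by simpa)

def doubleQPochInf (x P Q : ℂ) : ℂ := ∏' jk : ℕ × ℕ, (1 - x * P ^ jk.1 * Q ^ jk.2)

lemma qPochInf_eq_one_sub_mul {x Q : ℂ} (hQ : ‖Q‖ < 1) :
    qPochInf x Q = (1 - x) * qPochInf (Q * x) Q := by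
  have hshift : (fun k : ℕ => 1 - x * Q ^ (k + 1)) = fun k => 1 - Q * x * Q ^ k := by
    ext k; ring
  rw [qPochInf, tprod_eq_zero_mul' (by
    rw [hshift]
    exact multipliable_one_sub (u := fun k => Q * x * Q ^ k) (summable_norm_mul_pow hQ)),
    hshift, pow_zero, mul_one, qPochInf]

lemma doubleQPochInf_eq_qPochInf_mul {x P Q : ℂ} (hP : ‖P‖ < 1) (hQ : ‖Q‖ < 1) :
    doubleQPochInf x P Q = qPochInf x Q * doubleQPochInf (P * x) P Q := by
  have hfib : ∀ y : ℂ, HasProd (fun j : ℕ => ∏' k : ℕ, (1 - y * P ^ j * Q ^ k))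
      (doubleQPochInf y P Q) := fun y =>
    (multipliable_one_sub (u := fun jk : ℕ × ℕ => y * P ^ jk.1 * Q ^ jk.2)
      (summable_norm_mul_pow_mul_pow hP hQ)).hasProd.prod_fiberwise
      fun j => (multipliable_one_sub (u := fun k => y * P ^ j * Q ^ k)
        (summable_norm_mul_pow hQ)).hasProd
  have hshift : (fun j : ℕ => ∏' k : ℕ, (1 - x * P ^ (j + 1) * Q ^ k))
      = fun j => ∏' k : ℕ, (1 - P * x * P ^ j * Q ^ k) := by
    ext j; congr 1 with k; ring
  rw [← (hfib x).tprod_eq, ← (hfib (P * x)).tprod_eq,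
    tprod_eq_zero_mul' (by rw [hshift]; exact (hfib (P * x)).multipliable), hshift]
  simp only [pow_zero, mul_one, qPochInf]

lemma notPole.one_sub_ne_zero {w P Q : ℂ} (h : notPole w P Q) (j k : ℕ) :
    1 - w * P ^ j * Q ^ k ≠ 0 := by
  intro hc
  have hw : w * (P ^ j * Q ^ k) = 1 := by linear_combination -hc
  refine h j k ?_
  rw [zpow_neg, zpow_neg, zpow_natCast, zpow_natCast, ← mul_inv]
  exact eq_inv_of_mul_eq_one_left hw

lemma notPole.mul_left {w P Q : ℂ} (hP : P ≠ 0) (h : notPole w P Q) : notPole (P * w) P Q := by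
  intro j k hc
  refine h (j + 1) k ?_
  rw [Nat.cast_succ, neg_add, zpow_add₀ hP, mul_right_comm, ← hc, zpow_neg_one]
  field_simp

lemma notPole.mul_right {w P Q : ℂ} (hP : P ≠ 0) (h : notPole w P Q) : notPole (w * P) P Q :=
  mul_comm P w ▸ h.mul_left hP

lemma doubleQPochInf_ne_zero {w P Q : ℂ} (hP : ‖P‖ < 1) (hQ : ‖Q‖ < 1) (h : notPole w P Q) :
    doubleQPochInf w P Q ≠ 0 :=
  tprod_one_sub_ne_zero (u := fun jk : ℕ × ℕ => w * P ^ jk.1 * Q ^ jk.2)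
    (summable_norm_mul_pow_mul_pow hP hQ) fun jk => h.one_sub_ne_zero jk.1 jk.2

lemma ellGamma_eq_div {w P Q : ℂ} (hP : ‖P‖ < 1) (hQ : ‖Q‖ < 1) (h : notPole w P Q) :
    ellGamma w P Q = doubleQPochInf (w⁻¹ * P * Q) P Q / doubleQPochInf w P Q := by
  rw [doubleQPochInf, doubleQPochInf, ← Multipliable.tprod_div₀
    (multipliable_one_sub (u := fun jk : ℕ × ℕ => w⁻¹ * P * Q * P ^ jk.1 * Q ^ jk.2)
      (summable_norm_mul_pow_mul_pow hP hQ))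
    (multipliable_one_sub (u := fun jk : ℕ × ℕ => w * P ^ jk.1 * Q ^ jk.2)
      (summable_norm_mul_pow_mul_pow hP hQ))
    (doubleQPochInf_ne_zero hP hQ h), ellGamma]
  congr 1 with jk
  ring

lemma ellGamma_mul_left {w P Q : ℂ} (hP0 : P ≠ 0) (hP : ‖P‖ < 1) (hQ : ‖Q‖ < 1)
    (h : notPole w P Q) : ellGamma (P * w) P Q = theta0 w Q * ellGamma w P Q := by
  have hden := doubleQPochInf_ne_zero hP hQ h
  rw [doubleQPochInf_eq_qPochInf_mul hP hQ, mul_ne_zero_iff] at hden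
  have harg : (P * w)⁻¹ * P * Q = Q * w⁻¹ := by
    rw [mul_inv_rev, mul_assoc w⁻¹, inv_mul_cancel₀ hP0]; ring
  rw [ellGamma_eq_div hP hQ (h.mul_left hP0), ellGamma_eq_div hP hQ h, harg,
    doubleQPochInf_eq_qPochInf_mul hP hQ (x := Q * w⁻¹),
    doubleQPochInf_eq_qPochInf_mul hP hQ (x := w),
    show P * (Q * w⁻¹) = w⁻¹ * P * Q by ring, theta0]
  field_simp [hden.1]

lemma theta0_mul_left {x s : ℂ} (hs0 : s ≠ 0) (hs : ‖s‖ < 1) (hx : x ≠ 0) :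
    theta0 (s * x) s = -x⁻¹ * theta0 x s := by
  rw [theta0, theta0, show s * (s * x)⁻¹ = x⁻¹ by field_simp, qPochInf_eq_one_sub_mul hs (x := x),
    qPochInf_eq_one_sub_mul hs (x := x⁻¹)]
  field_simp
  ring

lemma theta0_zpow_mul {x s : ℂ} (hs0 : s ≠ 0) (hs : ‖s‖ < 1) (hx : x ≠ 0) (M : ℤ) :
    theta0 (s ^ M * x) s = (-x) ^ (-M) * s ^ (-(M * (M - 1) / 2)) * theta0 x s := by
  set g : ℤ → ℂ := fun M => (-x) ^ M * s ^ (M * (M - 1) / 2) * theta0 (s ^ M * x) s with hg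
  have hstep : ∀ M, g (M + 1) = g M := fun M => by
    have hM : s ^ M ≠ 0 := zpow_ne_zero M hs0
    have hshift : s ^ (M + 1) * x = s * (s ^ M * x) := by rw [zpow_add₀ hs0, zpow_one]; ring
    simp only [hg]
    rw [hshift, theta0_mul_left hs0 hs (mul_ne_zero hM hx), add_mul_add_sub_one_div_two M 1,
      zpow_add₀ (neg_ne_zero.2 hx), zpow_add₀ hs0, zpow_add₀ hs0]
    norm_num
    field_simp
  have hconst : ∀ M, g M = theta0 x s := fun M => by
    induction M using Int.induction_on with
    | zero => simp [hg]
    | succ i ih => rw [hstep, ih]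
    | pred i ih => rw [← hstep, sub_add_cancel, ih]
  have hxM : (-x) ^ M ≠ 0 := zpow_ne_zero M (neg_ne_zero.2 hx)
  rw [← hconst M, hg, zpow_neg, zpow_neg]
  field_simp

section LensGamma

variable {r : ℕ} {p q : ℂ}

lemma lensReg_add_of_lensReg_add_two_mul (hp : p ≠ 0) (hq : q ≠ 0) {w : ℂ} {M : ℤ}
    (h : lensReg r w M p q) (h₂ : lensReg r w (M + 2 * r) p q) : lensReg r w (M + r) p q := by
  constructor
  · simpa only [zpow_add₀ hp, zpow_natCast, mul_assoc] using h.1.mul_right (pow_ne_zero r hp)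
  · have e : (r : ℤ) - (M + r) = ((r : ℤ) - (M + 2 * r)) + r := by ring
    simpa only [e, zpow_add₀ hq, zpow_natCast, mul_assoc] using h₂.2.mul_right (pow_ne_zero r hq)

lemma lensGamma_add (hr : r ≠ 0) (hp : p ≠ 0) (hq : q ≠ 0) (hp1 : ‖p‖ < 1) (hq1 : ‖q‖ < 1)
    {w : ℂ} (hw : w ≠ 0) {M : ℤ} (h : lensReg r w M p q) (h' : lensReg r w (M + r) p q) :
    lensGamma r w (M + r) p q
      = (-(w * q ^ (-M))) ^ (-M) * (p * q) ^ (-(M * (M - 1) / 2)) * lensGamma r w M p q := by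
  have hpq : ‖p * q‖ < 1 := by
    rw [norm_mul]; nlinarith [norm_nonneg p, norm_nonneg q]
  have hpr : ‖p ^ r‖ < 1 := by rw [norm_pow]; exact pow_lt_one₀ (norm_nonneg _) hp1 hr
  have hqr : ‖q ^ r‖ < 1 := by rw [norm_pow]; exact pow_lt_one₀ (norm_nonneg _) hq1 hr
  have hneg : (r : ℤ) - (M + r) = -M := by ring
  have hreg : notPole (w * q ^ (-M)) (q ^ r) (p * q) := hneg ▸ h'.2
  have hθ : theta0 (w * p ^ M) (p * q)
      = (-(w * q ^ (-M))) ^ (-M) * (p * q) ^ (-(M * (M - 1) / 2))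
        * theta0 (w * q ^ (-M)) (p * q) := by
    rw [← theta0_zpow_mul (mul_ne_zero hp hq) hpq (mul_ne_zero hw (zpow_ne_zero _ hq)),
      mul_zpow, zpow_neg q]
    field_simp
  have hΓp : ellGamma (w * p ^ (M + r)) (p ^ r) (p * q)
      = theta0 (w * p ^ M) (p * q) * ellGamma (w * p ^ M) (p ^ r) (p * q) := by
    rw [← ellGamma_mul_left (pow_ne_zero r hp) hpr hpq h.1, zpow_add₀ hp, zpow_natCast]
    ring_nf
  have hΓq : ellGamma (w * q ^ ((r : ℤ) - M)) (q ^ r) (p * q)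
      = theta0 (w * q ^ (-M)) (p * q) * ellGamma (w * q ^ (-M)) (q ^ r) (p * q) := by
    rw [← ellGamma_mul_left (pow_ne_zero r hq) hqr hpq hreg, sub_eq_neg_add, zpow_add₀ hq,
      zpow_natCast]
    ring_nf
  rw [lensGamma, lensGamma, hneg, hΓp, hΓq, hθ]
  ring

end LensGamma

section RarefiedGamma

variable {r : ℕ} {p q σ τ : ℂ}

def rarShiftExp (r : ℕ) (M : ℤ) : ℤ := (r - 1) * M + r * (r - 1) / 2

def rarShiftExpτ (r : ℕ) (M : ℤ) : ℤ :=
  (r - 1) * M ^ 2 + r * (r - 1) * M + r * (r - 1) * (2 * r - 1) / 6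

def rarShiftFactor (r : ℕ) (σ τ w : ℂ) (M : ℤ) : ℂ :=
  (-w / σ) ^ rarShiftExp r M * τ ^ rarShiftExpτ r M

lemma rarShiftFactor_ne_zero (hσ : σ ≠ 0) (hτ : τ ≠ 0) {w : ℂ} (hw : w ≠ 0) (M : ℤ) :
    rarShiftFactor r σ τ w M ≠ 0 :=
  mul_ne_zero (zpow_ne_zero _ (div_ne_zero (neg_ne_zero.2 hw) hσ)) (zpow_ne_zero _ hτ)

lemma rarGamma_add (hr : r ≠ 0) (hp : p ≠ 0) (hq : q ≠ 0) (hp1 : ‖p‖ < 1) (hq1 : ‖q‖ < 1)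
    (hσ : σ ^ 2 = p * q) (hστ : σ * τ = p) {w : ℂ} (hw : w ≠ 0) {M : ℤ}
    (h : lensReg r w M p q) (h' : lensReg r w (M + r) p q) :
    rarGamma r w (M + r) p q σ τ = rarShiftFactor r σ τ w M * rarGamma r w M p q σ τ := by
  have hσ0 : σ ≠ 0 := by rintro rfl; simp_all
  have hτ0 : τ ≠ 0 := by rintro rfl; simp_all
  have hqστ : q = σ / τ := by
    field_simp
    exact mul_left_cancel₀ hσ0 (by linear_combination q * hστ - hσ)
  have hc : -w / σ ≠ 0 := div_ne_zero (neg_ne_zero.2 hw) hσ0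
  obtain ⟨a, ha⟩ := (Int.even_mul_pred_self M).two_dvd
  have hlens : (-(w * q ^ (-M))) ^ (-M) * (p * q) ^ (-(M * (M - 1) / 2))
      = (-w / σ) ^ (-M) * τ ^ (-M ^ 2) := by
    rw [← hσ, ha, Int.mul_ediv_cancel_left _ two_ne_zero, ← zpow_natCast, ← zpow_mul,
      show (2 : ℕ) * -a = M - M ^ 2 by push_cast; linear_combination ha, zpow_sub₀ hσ0,
      neg_mul_eq_neg_mul, mul_zpow, ← zpow_mul, neg_mul_neg, ← sq, hqστ, div_zpow, div_zpow,
      zpow_neg, zpow_neg, zpow_neg]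
    field_simp
  have hexp : (M + r) * (M + r - 1) / 2 + -M = rarShiftExp r M + M * (M - 1) / 2 := by
    rw [add_mul_add_sub_one_div_two, rarShiftExp]; ring
  have hexpτ : (M + r) * (M + r - 1) * (2 * (M + r) - 1) / 6 + -M ^ 2
      = rarShiftExpτ r M + M * (M - 1) * (2 * M - 1) / 6 := by
    rw [add_mul_add_sub_one_mul_two_mul_add_sub_one_div_six, rarShiftExpτ]; ring
  rw [rarGamma, rarGamma, rarShiftFactor, lensGamma_add hr hp hq hp1 hq1 hw h h', hlens]
  calc _ = (-w / σ) ^ ((M + r) * (M + r - 1) / 2 + -M)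
        * τ ^ ((M + r) * (M + r - 1) * (2 * (M + r) - 1) / 6 + -M ^ 2)
        * lensGamma r w M p q := by rw [zpow_add₀ hc, zpow_add₀ hτ0]; ring
    _ = _ := by rw [hexp, hexpτ, zpow_add₀ hc, zpow_add₀ hτ0]; ring

lemma rarGamma_add_two_mul (hr : r ≠ 0) (hp : p ≠ 0) (hq : q ≠ 0) (hp1 : ‖p‖ < 1)
    (hq1 : ‖q‖ < 1) (hσ : σ ^ 2 = p * q) (hστ : σ * τ = p) {w : ℂ} (hw : w ≠ 0) {M : ℤ}
    (h : lensReg r w M p q) (h₂ : lensReg r w (M + 2 * r) p q) :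
    rarGamma r w (M + 2 * r) p q σ τ
      = rarShiftFactor r σ τ w (M + r) * rarShiftFactor r σ τ w M * rarGamma r w M p q σ τ := by
  have h₁ := lensReg_add_of_lensReg_add_two_mul hp hq h h₂
  have e : M + 2 * r = M + r + r := by ring
  rw [e] at h₂ ⊢
  rw [rarGamma_add hr hp hq hp1 hq1 hσ hστ hw h₁ h₂, rarGamma_add hr hp hq hp1 hq1 hσ hστ hw h h₁,
    mul_assoc]

lemma rarShiftExp_neg_sub (M : ℤ) : rarShiftExp r (-M - r) = -rarShiftExp r M := by
  obtain ⟨b, hb⟩ := (Int.even_mul_pred_self (r : ℤ)).two_dvd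
  rw [rarShiftExp, rarShiftExp, hb, Int.mul_ediv_cancel_left _ two_ne_zero]
  linear_combination -hb

lemma rarShiftExpτ_neg_sub (M : ℤ) : rarShiftExpτ r (-M - r) = rarShiftExpτ r M := by
  simp only [rarShiftExpτ]; ring

lemma rarShiftFactor_inv_neg_sub (hσ : σ ≠ 0) {w : ℂ} (hw : w ≠ 0) (M : ℤ) :
    rarShiftFactor r σ τ w⁻¹ (-M - r) = (σ ^ 2) ^ rarShiftExp r M * rarShiftFactor r σ τ w M := by
  rw [rarShiftFactor, rarShiftFactor, rarShiftExp_neg_sub, rarShiftExpτ_neg_sub, zpow_neg,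
    ← inv_zpow, show (-w⁻¹ / σ)⁻¹ = σ ^ 2 * (-w / σ) by field_simp, mul_zpow]
  ring

lemma rarShiftFactor_mul_eq_mul_inv (hσ : σ ≠ 0) (hτ : τ ≠ 0) {t z : ℂ} (ht : t ≠ 0) (hz : z ≠ 0)
    (A B : ℤ) :
    rarShiftFactor r σ τ (t * z) A
      = (-t / σ) ^ (rarShiftExp r A - rarShiftExp r B) * z ^ (rarShiftExp r A + rarShiftExp r B)
        * τ ^ (rarShiftExpτ r A - rarShiftExpτ r B) * rarShiftFactor r σ τ (t * z⁻¹) B := by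
  have hc : -t / σ ≠ 0 := div_ne_zero (neg_ne_zero.2 ht) hσ
  rw [rarShiftFactor, rarShiftFactor, show -(t * z) / σ = -t / σ * z by ring,
    show -(t * z⁻¹) / σ = -t / σ * z⁻¹ by ring, mul_zpow, mul_zpow, inv_zpow, zpow_sub₀ hc,
    zpow_add₀ hz, zpow_sub₀ hτ]
  generalize -t / σ = c at hc ⊢
  field_simp

lemma prod_rarShiftFactor_of_balanced (hσ : σ ≠ 0) (hτ : τ ≠ 0) {z : ℂ} (hz : z ≠ 0)
    {t : Fin 6 → ℂ} (ht : ∀ a, t a ≠ 0) (hbal1 : ∏ a, t a = σ ^ 2) {n : Fin 6 → ℤ} {ε : ℤ}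
    (hbal2 : ∑ a, n a + 3 * ε = 0) (m : ℤ) :
    (σ ^ 4) ^ ((r - 1) * (2 * m + ε + r)) * ∏ a, rarShiftFactor r σ τ (t a * z) (n a + m + ε)
      = ∏ a, rarShiftFactor r σ τ (t a * z⁻¹) (n a - (m + r)) := by
  obtain ⟨b, hb⟩ := (Int.even_mul_pred_self (r : ℤ)).two_dvd
  have hexp : ∀ a, rarShiftExp r (n a + m + ε) - rarShiftExp r (n a - (m + r))
      = (r - 1) * (2 * m + ε + r) := fun a => by simp only [rarShiftExp]; ring
  have hexpz : ∀ a, rarShiftExp r (n a + m + ε) + rarShiftExp r (n a - (m + r))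
      = (r - 1) * (2 * n a + ε) := fun a => by
    simp only [rarShiftExp]
    rw [hb, Int.mul_ediv_cancel_left _ two_ne_zero]
    linear_combination -hb
  have hexpτ : ∀ a, rarShiftExpτ r (n a + m + ε) - rarShiftExpτ r (n a - (m + r))
      = (r - 1) * (2 * m + ε + r) * (2 * n a + ε) := fun a => by simp only [rarShiftExpτ]; ring
  have hsum : ∑ a, (2 * n a + ε) = 0 := by
    simp only [sum_add_distrib, ← mul_sum, sum_const, card_univ, Fintype.card_fin, nsmul_eq_mul]
    linear_combination 2 * hbal2
  have hprod : ∏ a, (-t a / σ) = (σ ^ 4)⁻¹ := by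
    rw [prod_div_distrib, prod_neg, hbal1, prod_const, card_univ, Fintype.card_fin]
    field_simp
  rw [prod_congr rfl fun a _ =>
    rarShiftFactor_mul_eq_mul_inv hσ hτ (ht a) hz (n a + m + ε) (n a - (m + r))]
  simp_rw [hexp, hexpz, hexpτ]
  rw [prod_mul_distrib, prod_mul_distrib, prod_mul_distrib, prod_zpow, hprod,
    prod_zpow_eq_zpow_sum _ _ hz, prod_zpow_eq_zpow_sum _ _ hτ, ← mul_sum, ← mul_sum, hsum]
  simp only [mul_zero, zpow_zero, mul_one]
  rw [← mul_assoc, ← mul_zpow, mul_inv_cancel₀ (pow_ne_zero 4 hσ), one_zpow, one_mul]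

lemma rarShiftExp_add_rarShiftExp_add (M : ℤ) :
    rarShiftExp r M + rarShiftExp r (M + r) = 2 * ((r - 1) * (M + r)) := by
  obtain ⟨b, hb⟩ := (Int.even_mul_pred_self (r : ℤ)).two_dvd
  rw [rarShiftExp, rarShiftExp, hb, Int.mul_ediv_cancel_left _ two_ne_zero]
  linear_combination -hb

lemma rarGamma_inv_neg (hr : r ≠ 0) (hp : p ≠ 0) (hq : q ≠ 0) (hp1 : ‖p‖ < 1) (hq1 : ‖q‖ < 1)
    (hσ : σ ^ 2 = p * q) (hστ : σ * τ = p) {w : ℂ} (hw : w ≠ 0) {M : ℤ}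
    (h : lensReg r w⁻¹ (-M - 2 * r) p q) (h₂ : lensReg r w⁻¹ (-M) p q) :
    rarGamma r w⁻¹ (-M) p q σ τ = (σ ^ 4) ^ ((r - 1) * (M + r))
      * rarShiftFactor r σ τ w (M + r) * rarShiftFactor r σ τ w M
      * rarGamma r w⁻¹ (-M - 2 * r) p q σ τ := by
  have hσ0 : σ ≠ 0 := by rintro rfl; simp_all
  have h2r := rarGamma_add_two_mul hr hp hq hp1 hq1 hσ hστ (inv_ne_zero hw) h
    (by rwa [sub_add_cancel])
  rw [sub_add_cancel] at h2r
  rw [h2r,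
    show -M - 2 * r + r = -M - r by ring, show -M - 2 * r = -(M + r) - r by ring,
    rarShiftFactor_inv_neg_sub hσ0 hw, rarShiftFactor_inv_neg_sub hσ0 hw,
    show σ ^ 4 = (σ ^ 2) ^ (2 : ℤ) by norm_num [← pow_mul], ← zpow_mul,
    ← rarShiftExp_add_rarShiftExp_add, zpow_add₀ (pow_ne_zero 2 hσ0)]
  ring

end RarefiedGamma

theorem Delta_kernel_r_periodic_general
    (r : ℕ) (hr : 1 ≤ r) (ε : ℤ)
    (p q σ τ : ℂ) (hp : p ≠ 0) (hq : q ≠ 0)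
    (hp1 : ‖p‖ < 1) (hq1 : ‖q‖ < 1)
    (hσ : σ ^ 2 = p * q) (hστ : σ * τ = p)
    (t : Fin 6 → ℂ) (n : Fin 6 → ℤ) (ht : ∀ a, t a ≠ 0)
    (hbal1 : ∏ a, t a = p * q) (hbal2 : (∑ a, n a) + 3 * ε = 0)
    (m : ℤ) (z : ℂ) (hz : z ≠ 0)
    (hreg1 : ΔReg r ε p q σ τ t n z m)
    (hreg2 : ΔReg r ε p q σ τ t n z (m + (r : ℤ))) :
    Δker r ε p q σ τ t n z (m + (r : ℤ)) = Δker r ε p q σ τ t n z m := by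
  have hr0 : r ≠ 0 := by omega
  have hσ0 : σ ≠ 0 := by rintro rfl; simp_all
  have hτ0 : τ ≠ 0 := by rintro rfl; simp_all
  have shift {w : ℂ} (hw : w ≠ 0) {M : ℤ} := rarGamma_add (M := M) hr0 hp hq hp1 hq1 hσ hστ hw
  have e₁ : ∀ a, n a + (m + r) + ε = n a + m + ε + r := fun a => by ring
  have e₂ : ∀ a, n a - m = n a - (m + r) + r := fun a => by ring
  have e₃ : 2 * (m + r) + ε = 2 * m + ε + 2 * r := by ring
  have e₄ : -(2 * m + ε + 2 * r) = -(2 * m + ε) - 2 * r := by ring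
  obtain ⟨hnum, hsq, hinv, hG, -⟩ := hreg1
  obtain ⟨hnum', hsq', hinv', -, hGinv⟩ := hreg2
  simp only [Δker, e₁, e₂, e₃, e₄, inv_pow] at hnum hnum' hsq' hinv hinv' hGinv ⊢
  rw [rarGamma_add_two_mul hr0 hp hq hp1 hq1 hσ hστ (pow_ne_zero 2 hz) hsq hsq',
    rarGamma_inv_neg hr0 hp hq hp1 hq1 hσ hστ (pow_ne_zero 2 hz) hinv' hinv,
    prod_congr rfl fun a _ =>
      congrArg (· * _) (shift (mul_ne_zero (ht a) hz) (hnum a).1 (hnum' a).1),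
    prod_congr rfl fun a _ =>
      congrArg (_ * ·) (shift (mul_ne_zero (ht a) (inv_ne_zero hz)) (hnum' a).2 (hnum a).2),
    prod_congr rfl fun a _ => mul_left_comm _ _ _]
  simp only [prod_mul_distrib]
  rw [← prod_rarShiftFactor_of_balanced hσ0 hτ0 hz ht (hσ ▸ hbal1) hbal2 m]
  have hF := rarShiftFactor_ne_zero (r := r) hσ0 hτ0 (pow_ne_zero 2 hz)
  rw [div_eq_div_iff (by simp only [mul_ne_zero_iff]; exact ⟨⟨⟨hF _, hF _⟩, hG⟩, hGinv⟩)
    (by simp only [mul_ne_zero_iff]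
        exact ⟨hG, ⟨⟨zpow_ne_zero _ (pow_ne_zero 4 hσ0), hF _⟩, hF _⟩, hGinv⟩)]
  ring

/-- Under the balancing condition the kernel of the rarefied elliptic beta integral is
`r`-periodic in the discrete variable `m` (formula (4.6) of the paper). -/
theorem Delta_kernel_r_periodic
    (r : ℕ) (hr : 1 ≤ r) (ε : ℤ) (hε : ε = 0 ∨ ε = 1)
    (p q σ τ : ℂ) (hp : p ≠ 0) (hq : q ≠ 0)
    (hp1 : ‖p‖ < 1) (hq1 : ‖q‖ < 1)
    (hσ : σ ^ 2 = p * q) (hτ : τ ^ 2 = p / q) (hστ : σ * τ = p)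
    (t : Fin 6 → ℂ) (n : Fin 6 → ℤ) (ht : ∀ a, t a ≠ 0)
    (hbal1 : ∏ a, t a = p * q) (hbal2 : (∑ a, n a) + 3 * ε = 0)
    (m : ℤ) (z : ℂ) (hz : z ≠ 0)
    (hreg1 : ΔReg r ε p q σ τ t n z m)
    (hreg2 : ΔReg r ε p q σ τ t n z (m + (r : ℤ))) :
    Δker r ε p q σ τ t n z (m + (r : ℤ)) = Δker r ε p q σ τ t n z m :=
  Delta_kernel_r_periodic_general r hr ε p q σ τ hp hq hp1 hq1 hσ hστ t n ht hbal1 hbal2 m z hz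
    hreg1 hreg2
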